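/- arXiv:1805.00229 — 3 statements merged into one kernel-verified Lean document; each statement's English description precedes it below -/
import Mathlib

section
/- Let P = (S, 𝓛) be a nondegenerate polar space. Then for every point a ∈ S, the set a^⊥ of all points collinear with a is a hyperplane of P (i.e. a proper subspace of P that meets every line). -/
namespace PolarComp

variable {S : Type*}

/-- A partial linear space: every line has at least two points, and two
distinct lines share at most one point. -/
def IsPLS (𝓛 : Set (Set S)) : Prop :=
  (∀ l ∈ 𝓛, ∃ a b : S, a ≠ b ∧ a ∈ l ∧ b ∈ l) ∧
  (∀ l ∈ 𝓛, ∀ m ∈ 𝓛, l ≠ m → ∀ a b : S, a ∈ l ∩ m → b ∈ l ∩ m → a = b)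

/-- Thick: every line has at least three points. -/
def Thick (𝓛 : Set (Set S)) : Prop :=
  ∀ l ∈ 𝓛, ∃ a b c : S, a ≠ b ∧ a ≠ c ∧ b ≠ c ∧ a ∈ l ∧ b ∈ l ∧ c ∈ l

/-- Two points are collinear iff they lie on a common line (every point is
collinear with itself). -/
def Collin (𝓛 : Set (Set S)) (a b : S) : Prop :=
  a = b ∨ ∃ l ∈ 𝓛, a ∈ l ∧ b ∈ l

/-- Nondegenerate: no point is collinear with all other points. -/
def Nondegenerate (𝓛 : Set (Set S)) : Prop :=
  ∀ a : S, ∃ b : S, ¬ Collin 𝓛 a b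

/-- The one-or-all axiom: a point off a line is collinear with exactly one or
with all points of the line. -/
def OneOrAll (𝓛 : Set (Set S)) : Prop :=
  ∀ l ∈ 𝓛, ∀ a : S, a ∉ l →
    (∃! b, b ∈ l ∧ Collin 𝓛 a b) ∨ (∀ b ∈ l, Collin 𝓛 a b)

/-- A polar space is a partial linear space satisfying the one-or-all axiom. -/
def IsPolarSpace (𝓛 : Set (Set S)) : Prop := IsPLS 𝓛 ∧ OneOrAll 𝓛

/-- A subspace: contains every line meeting it in at least two points. -/
def IsSubspace (𝓛 : Set (Set S)) (X : Set S) : Prop :=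
  ∀ l ∈ 𝓛, (∃ a ∈ l ∩ X, ∃ b ∈ l ∩ X, a ≠ b) → l ⊆ X

/-- A hyperplane: a proper subspace meeting every line. -/
def IsHyperplane (𝓛 : Set (Set S)) (X : Set S) : Prop :=
  IsSubspace 𝓛 X ∧ X ≠ Set.univ ∧ ∀ l ∈ 𝓛, (l ∩ X).Nonempty

/-- A singular set: any two of its points are collinear. -/
def SingularSet (𝓛 : Set (Set S)) (X : Set S) : Prop :=
  ∀ a ∈ X, ∀ b ∈ X, Collin 𝓛 a b

/-- Rank at least `n`: there is a strictly increasing chain of `n` nonempty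
singular subspaces. -/
def RankAtLeast (𝓛 : Set (Set S)) (n : ℕ) : Prop :=
  ∃ X : Fin n → Set S, StrictMono X ∧
    ∀ i, (X i).Nonempty ∧ SingularSet 𝓛 (X i) ∧ IsSubspace 𝓛 (X i)

/-- `perp 𝓛 a` is the set of points collinear with `a`. -/
def perp (𝓛 : Set (Set S)) (a : S) : Set S := {b | Collin 𝓛 a b}

/-- The radical of `X`: `X ∩ X^⊥`. -/
def radSet (𝓛 : Set (Set S)) (X : Set S) : Set S :=
  X ∩ {a | ∀ b ∈ X, Collin 𝓛 a b}

/-- The lines of the complement `D(P, W)`. -/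
def compLines (𝓛 : Set (Set S)) (W : Set S) : Set (Set S) :=
  {K | ∃ k ∈ 𝓛, ¬ k ⊆ W ∧ K = k \ W}

/-- Two proper lines are parallel iff their closures meet in `W`. -/
def Parallel (𝓛 : Set (Set S)) (W : Set S) (K L : Set S) : Prop :=
  ∃ k ∈ 𝓛, ∃ l ∈ 𝓛, ¬ k ⊆ W ∧ ¬ l ⊆ W ∧ K = k \ W ∧ L = l \ W ∧
    (k ∩ l ∩ W).Nonempty

/-- A proper line is affine iff its closure meets `W`. -/
def IsAffineLine (𝓛 : Set (Set S)) (W : Set S) (K : Set S) : Prop :=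
  ∃ k ∈ 𝓛, ¬ k ⊆ W ∧ K = k \ W ∧ (k ∩ W).Nonempty

/-- `AtInfinity 𝓛 W K a` says that `a = K^∞`, i.e. `a` is a point of `K̄ ∩ W`. -/
def AtInfinity (𝓛 : Set (Set S)) (W : Set S) (K : Set S) (a : S) : Prop :=
  ∃ k ∈ 𝓛, ¬ k ⊆ W ∧ K = k \ W ∧ a ∈ k ∩ W

/-- A deep point of `W`: a point of `W` which is `L^∞` for no affine line `L`. -/
def IsDeepPoint (𝓛 : Set (Set S)) (W : Set S) (a : S) : Prop :=
  a ∈ W ∧ ∀ K : Set S, ¬ AtInfinity 𝓛 W K a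

/-- A plane: a minimal singular subspace containing a given line and a given
point not on that line. -/
def IsPlane (𝓛 : Set (Set S)) (X : Set S) : Prop :=
  ∃ l ∈ 𝓛, ∃ a : S, a ∉ l ∧ a ∈ X ∧ l ⊆ X ∧
    SingularSet 𝓛 X ∧ IsSubspace 𝓛 X ∧
    ∀ Y : Set S, SingularSet 𝓛 Y → IsSubspace 𝓛 Y → l ⊆ Y → a ∈ Y → Y ⊆ X → Y = X

/-- `Π^∞`: the points at infinity of a plane of the complement with closure `Pl`. -/
def planeInfinity (𝓛 : Set (Set S)) (W : Set S) (Pl : Set S) : Set S :=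
  {a | ∃ M : Set S, IsAffineLine 𝓛 W M ∧ M ⊆ Pl \ W ∧ AtInfinity 𝓛 W M a}

/-- A deep line: an improper line `L ⊆ W` which is `Π^∞` for no plane of the
complement. -/
def IsDeepLine (𝓛 : Set (Set S)) (W : Set S) (L : Set S) : Prop :=
  L ∈ 𝓛 ∧ L ⊆ W ∧
    ∀ Pl : Set S, IsPlane 𝓛 Pl → ¬ Pl ⊆ W → planeInfinity 𝓛 W Pl ≠ L

/-- The relation `∥*` on proper lines of the complement. -/
def ParStar (𝓛 : Set (Set S)) (W : Set S) (K₁ K₂ : Set S) : Prop :=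
  K₁ ∈ compLines 𝓛 W ∧ K₂ ∈ compLines 𝓛 W ∧ K₁ ∩ K₂ = ∅ ∧
    ∃ L₁ ∈ compLines 𝓛 W, ∃ L₂ ∈ compLines 𝓛 W, L₁ ≠ L₂ ∧
      (L₁ ∩ L₂).Nonempty ∧ (L₁ ∩ K₁).Nonempty ∧ (L₁ ∩ K₂).Nonempty ∧
      (L₂ ∩ K₁).Nonempty ∧ (L₂ ∩ K₂).Nonempty

/-- `∥ᵗ`: the transitive closure of `∥*`. -/
def ParT (𝓛 : Set (Set S)) (W : Set S) : Set S → Set S → Prop :=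
  Relation.TransGen (ParStar 𝓛 W)

/-- The anti-euclidean relation `~` on affine lines: `K₁ ~ K₂` iff no affine
line through a point of `K₁` is parallel to `K₂`. -/
def Tilde (𝓛 : Set (Set S)) (W : Set S) (K₁ K₂ : Set S) : Prop :=
  ∀ a ∈ K₁, ∀ M : Set S, IsAffineLine 𝓛 W M → a ∈ M → ¬ Parallel 𝓛 W M K₂

/-- `[K₁] ≡ [K₂]`: `M ~ N` and `N ~ M` for all `M ∥ K₁` and `N ∥ K₂`. -/
def EquivCls (𝓛 : Set (Set S)) (W : Set S) (K₁ K₂ : Set S) : Prop :=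
  ∀ M N : Set S, IsAffineLine 𝓛 W M → IsAffineLine 𝓛 W N →
    Parallel 𝓛 W M K₁ → Parallel 𝓛 W N K₂ → Tilde 𝓛 W M N ∧ Tilde 𝓛 W N M

/-- The parallel class of an affine line. -/
def parClass (𝓛 : Set (Set S)) (W : Set S) (L : Set S) : Set (Set S) :=
  {M | IsAffineLine 𝓛 W M ∧ Parallel 𝓛 W M L}

/-- The class of affine lines with point at infinity `w`. -/
def classAt (𝓛 : Set (Set S)) (W : Set S) (w : S) : Set (Set S) :=
  {L | IsAffineLine 𝓛 W L ∧ AtInfinity 𝓛 W L w}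

/-- A witness that the polar space embeds in a projective space `ℙ(F, V)`. -/
structure EmbeddingWitness (𝓛 : Set (Set S)) where
  F : Type
  [iF : DivisionRing F]
  V : Type
  [iV : AddCommGroup V]
  [iM : Module F V]
  f : S → Projectivization F V
  inj : Function.Injective f
  spanning : ∀ T : Submodule F V, (∀ s : S, Projectivization.submodule (f s) ≤ T) → T = ⊤
  lines2dim : ∀ l ∈ 𝓛, ∃ U : Submodule F V, Module.finrank F ↥U = 2 ∧
    f '' l = {p | ∃ v : V, ∃ hv : v ≠ 0, v ∈ U ∧ p = Projectivization.mk F v hv}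

/-- An embeddable polar space. -/
def Embeddable (𝓛 : Set (Set S)) : Prop := Nonempty (EmbeddingWitness 𝓛)


theorem IsPLS.nonempty_of_mem {𝓛 : Set (Set S)} (h : IsPLS 𝓛) {l : Set S} (hl : l ∈ 𝓛) :
    l.Nonempty :=
  let ⟨b, _, _, hb, _⟩ := h.1 l hl
  ⟨b, hb⟩

namespace OneOrAll

variable {𝓛 : Set (Set S)} (h : OneOrAll 𝓛) (a : S)
include h

theorem isSubspace_perp : IsSubspace 𝓛 (perp 𝓛 a) := by
  rintro l hl ⟨b, ⟨hbl, hab⟩, c, ⟨hcl, hac⟩, hbc⟩ x hx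
  by_cases hal : a ∈ l
  · exact Or.inr ⟨l, hl, hal, hx⟩
  rcases h l hl a hal with ⟨d, -, huniq⟩ | hall
  · exact absurd ((huniq b ⟨hbl, hab⟩).trans (huniq c ⟨hcl, hac⟩).symm) hbc
  · exact hall x hx

theorem inter_perp_nonempty {l : Set S} (hl : l ∈ 𝓛) (hne : l.Nonempty) :
    (l ∩ perp 𝓛 a).Nonempty := by
  by_cases hal : a ∈ l
  · exact ⟨a, hal, Or.inl rfl⟩
  rcases h l hl a hal with ⟨d, hd, -⟩ | hall
  · exact ⟨d, hd⟩
  · obtain ⟨b, hb⟩ := hne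
    exact ⟨b, hb, hall b hb⟩

end OneOrAll

theorem Nondegenerate.perp_ne_univ {𝓛 : Set (Set S)} (h : Nondegenerate 𝓛) (a : S) :
    perp 𝓛 a ≠ Set.univ := by
  obtain ⟨b, hb⟩ := h a
  exact fun huniv => hb (huniv ▸ Set.mem_univ b : b ∈ perp 𝓛 a)

theorem statement_0 (𝓛 : Set (Set S)) (hpolar : IsPolarSpace 𝓛)
    (hnd : Nondegenerate 𝓛) :
    ∀ a : S, IsHyperplane 𝓛 (perp 𝓛 a) := fun a =>
  ⟨hpolar.2.isSubspace_perp a, hnd.perp_ne_univ a,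
    fun _ hl => hpolar.2.inter_perp_nonempty a hl (hpolar.1.nonempty_of_mem hl)⟩

end PolarComp
end

section
/- Let P = (S, 𝓛) be a thick nondegenerate polar space of rank at least 3 and let W be a hyperplane of P. Then W contains at most one deep point, and every deep point of W lies in rad W. -/
namespace PolarComp

variable {S : Type*}

/-! A deep point `a` has `a^⊥ ⊆ W`, since every line through it is improper. Deepness spreads
to the points of `W` not collinear with a deep point; combined with thickness this forces two
deep points to be collinear, so that `a^⊥ = W` for every deep point `a`; and distinct points
of a nondegenerate polar space have distinct perps. -/

section PolarSpace

variable {𝓛 : Set (Set S)}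

theorem Collin.symm {a b : S} (h : Collin 𝓛 a b) : Collin 𝓛 b a := by
  rcases h with rfl | ⟨l, hl, ha, hb⟩
  · exact Or.inl rfl
  · exact Or.inr ⟨l, hl, hb, ha⟩

theorem collin_of_mem_line {l : Set S} (hl : l ∈ 𝓛) {a b : S} (ha : a ∈ l) (hb : b ∈ l) :
    Collin 𝓛 a b :=
  Or.inr ⟨l, hl, ha, hb⟩

theorem Collin.exists_line {a b : S} (h : Collin 𝓛 a b) (hne : a ≠ b) :
    ∃ l ∈ 𝓛, a ∈ l ∧ b ∈ l :=
  h.resolve_left hne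

theorem Thick.exists_ne_ne (hthick : Thick 𝓛) {l : Set S} (hl : l ∈ 𝓛) (p q : S) :
    ∃ d ∈ l, d ≠ p ∧ d ≠ q := by
  obtain ⟨a, b, c, hab, hac, hbc, ha, hb, hc⟩ := hthick l hl
  by_contra! H
  have key : ∀ x ∈ l, ∀ y ∈ l, x ≠ y → x = p ∨ y = p := fun x hx y hy hxy => by
    by_contra! hp
    exact hxy ((H x hx hp.1).trans (H y hy hp.2).symm)
  rcases key a ha b hb hab with rfl | rfl
  · rcases key b hb c hc hbc with rfl | rfl
    · exact hab rfl
    · exact hac rfl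
  · rcases key a ha c hc hac with rfl | rfl
    · exact hab rfl
    · exact hbc rfl

theorem RankAtLeast.nonempty_lines {n : ℕ} (hrank : RankAtLeast 𝓛 n) (hn : 2 ≤ n) :
    𝓛.Nonempty := by
  obtain ⟨X, hmono, hX⟩ := hrank
  have hlt : X ⟨0, by omega⟩ ⊂ X ⟨1, by omega⟩ := hmono (Fin.mk_lt_mk.mpr Nat.zero_lt_one)
  obtain ⟨u, hu⟩ := (hX _).1
  obtain ⟨v, hv, hvu⟩ := Set.exists_of_ssubset hlt
  have huv : Collin 𝓛 u v := (hX _).2.1 u (hlt.subset hu) v hv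
  obtain ⟨l, hl, -⟩ := huv.exists_line (fun h => hvu (h ▸ hu))
  exact ⟨l, hl⟩

namespace IsPolarSpace

variable (hpolar : IsPolarSpace 𝓛)
include hpolar

theorem exists_collin_mem_line {l : Set S} (hl : l ∈ 𝓛) (x : S) : ∃ b ∈ l, Collin 𝓛 x b := by
  by_cases hx : x ∈ l
  · exact ⟨x, hx, Or.inl rfl⟩
  rcases hpolar.2 l hl x hx with ⟨b, hb, -⟩ | hall
  · exact ⟨b, hb⟩
  · obtain ⟨c, -, -, hc, -⟩ := hpolar.1.1 l hl
    exact ⟨c, hc, hall c hc⟩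

theorem eq_of_collin_of_collin {l : Set S} (hl : l ∈ 𝓛) {x d : S} (hx : x ∉ l) (hd : d ∈ l)
    (hxd : ¬ Collin 𝓛 x d) {b c : S} (hb : b ∈ l) (hc : c ∈ l) (hxb : Collin 𝓛 x b)
    (hxc : Collin 𝓛 x c) : b = c := by
  rcases hpolar.2 l hl x hx with ⟨e, -, he⟩ | hall
  · rw [he b ⟨hb, hxb⟩, he c ⟨hc, hxc⟩]
  · exact absurd (hall d hd) hxd

theorem collin_of_collin_of_collin {l : Set S} (hl : l ∈ 𝓛) {x b c : S} (hb : b ∈ l)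
    (hc : c ∈ l) (hbc : b ≠ c) (hxb : Collin 𝓛 x b) (hxc : Collin 𝓛 x c) {d : S} (hd : d ∈ l) :
    Collin 𝓛 x d := by
  by_cases hx : x ∈ l
  · exact collin_of_mem_line hl hx hd
  by_contra hxd
  exact hbc (hpolar.eq_of_collin_of_collin hl hx hd hxd hb hc hxb hxc)

theorem exists_line_mem (hL : 𝓛.Nonempty) (x : S) : ∃ l ∈ 𝓛, x ∈ l := by
  obtain ⟨l, hl⟩ := hL
  obtain ⟨b, hb, hxb⟩ := hpolar.exists_collin_mem_line hl x
  by_cases hx : x = b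
  · exact ⟨l, hl, hx ▸ hb⟩
  obtain ⟨m, hm, hxm, -⟩ := hxb.exists_line hx
  exact ⟨m, hm, hxm⟩

theorem perp_subset_of_perp_subset (hnd : Nondegenerate 𝓛) {x p : S}
    (hxp : perp 𝓛 x ⊆ perp 𝓛 p) : perp 𝓛 p ⊆ perp 𝓛 x := by
  intro u (hpu : Collin 𝓛 p u)
  by_contra hxu
  have hpx : Collin 𝓛 p x := hxp (Or.inl rfl)
  obtain ⟨m, hm, hpm, hum⟩ := hpu.exists_line (by rintro rfl; exact hxu hpx.symm)
  obtain ⟨v, hpv⟩ := hnd p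
  obtain ⟨z, hzm, hvz⟩ := hpolar.exists_collin_mem_line hm v
  have hzp : z ≠ p := by rintro rfl; exact hpv hvz.symm
  have hxz : ¬ Collin 𝓛 x z := fun hxz =>
    hxu (hpolar.collin_of_collin_of_collin hm hpm hzm hzp.symm hpx.symm hxz hum)
  obtain ⟨o, ho, hvo, hzo⟩ :=
    hvz.exists_line (by rintro rfl; exact hpv (collin_of_mem_line hm hpm hzm))
  obtain ⟨t, hto, hxt⟩ := hpolar.exists_collin_mem_line ho x
  -- `p` meets `o` only in `z`, and `t ∈ x^⊥ ⊆ p^⊥`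
  have hzt : z = t := hpolar.eq_of_collin_of_collin ho
    (fun hpo => hpv (collin_of_mem_line ho hpo hvo)) hvo hpv hzo hto
    (collin_of_mem_line hm hpm hzm) (hxp hxt)
  exact hxz (hzt ▸ hxt)

theorem eq_of_perp_eq (hnd : Nondegenerate 𝓛) {x y : S} (hxy : perp 𝓛 x = perp 𝓛 y) :
    x = y := by
  have hcollin (t : S) : Collin 𝓛 x t ↔ Collin 𝓛 y t := Set.ext_iff.mp hxy t
  by_contra hne
  obtain ⟨l, hl, hxl, hyl⟩ := ((hcollin y).2 (Or.inl rfl)).exists_line hne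
  obtain ⟨u, hxu⟩ := hnd x
  obtain ⟨p, hpl, hup⟩ := hpolar.exists_collin_mem_line hl u
  have hxp : perp 𝓛 x ⊆ perp 𝓛 p := fun t (hxt : Collin 𝓛 x t) =>
    (hpolar.collin_of_collin_of_collin hl hxl hyl hne hxt.symm ((hcollin t).1 hxt).symm hpl).symm
  exact hxu (hpolar.perp_subset_of_perp_subset hnd hxp hup.symm)

end IsPolarSpace

end PolarSpace

section DeepPoint

variable {𝓛 : Set (Set S)} {W : Set S}

theorem IsDeepPoint.subset_of_mem_line {d : S} (hd : IsDeepPoint 𝓛 W d) {k : Set S}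
    (hk : k ∈ 𝓛) (hdk : d ∈ k) : k ⊆ W := by
  by_contra hkW
  exact hd.2 (k \ W) ⟨k, hk, hkW, rfl, hdk, hd.1⟩

theorem IsDeepPoint.perp_subset {d : S} (hd : IsDeepPoint 𝓛 W d) : perp 𝓛 d ⊆ W := by
  rintro y (rfl | ⟨l, hl, hdl, hyl⟩)
  · exact hd.1
  · exact hd.subset_of_mem_line hl hdl hyl

theorem not_isDeepPoint_of_mem_line {k : Set S} (hk : k ∈ 𝓛) (hkW : ¬ k ⊆ W) {h : S}
    (hhk : h ∈ k) (hhW : h ∈ W) : ¬ IsDeepPoint 𝓛 W h :=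
  fun hh => hh.2 (k \ W) ⟨k, hk, hkW, rfl, hhk, hhW⟩

variable (hpolar : IsPolarSpace 𝓛) (hW : IsHyperplane 𝓛 W)
include hpolar hW

-- A line through `s` leaving `W` would meet `d^⊥ ⊆ W` in a second point of `W`.
theorem IsDeepPoint.of_not_collin {d : S} (hd : IsDeepPoint 𝓛 W d) {s : S} (hsW : s ∈ W)
    (hds : ¬ Collin 𝓛 d s) : IsDeepPoint 𝓛 W s := by
  refine ⟨hsW, ?_⟩
  rintro K ⟨k, hk, hkW, rfl, hsk, -⟩
  obtain ⟨b, hbk, hdb⟩ := hpolar.exists_collin_mem_line hk d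
  have hbs : b ≠ s := by rintro rfl; exact hds hdb
  exact hkW (hW.1 k hk ⟨b, ⟨hbk, hd.perp_subset hdb⟩, s, ⟨hsk, hsW⟩, hbs⟩)

theorem IsDeepPoint.collin_of_not_isDeepPoint {d : S} (hd : IsDeepPoint 𝓛 W d) {h : S}
    (hhW : h ∈ W) (hh : ¬ IsDeepPoint 𝓛 W h) : Collin 𝓛 d h := by
  by_contra hdh
  exact hh (hd.of_not_collin hpolar hW hhW hdh)

theorem isDeepPoint_of_forall_ne_isDeepPoint (hthick : Thick 𝓛) (hnd : Nondegenerate 𝓛)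
    {j : Set S} (hj : j ∈ 𝓛) {h : S} (hhj : h ∈ j) (hhW : h ∈ W)
    (hdeep : ∀ d ∈ j, d ≠ h → IsDeepPoint 𝓛 W d) : IsDeepPoint 𝓛 W h := by
  obtain ⟨s, hhs⟩ := hnd h
  have hsj : s ∉ j := fun hsj => hhs (collin_of_mem_line hj hhj hsj)
  obtain ⟨p, hpj, hsp⟩ := hpolar.exists_collin_mem_line hj s
  have hph : p ≠ h := by rintro rfl; exact hhs hsp.symm
  have hsW : s ∈ W := (hdeep p hpj hph).perp_subset hsp.symm
  obtain ⟨d, hdj, hdh, hdp⟩ := hthick.exists_ne_ne hj h p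
  have hsd : ¬ Collin 𝓛 s d := fun hsd =>
    hdp (hpolar.eq_of_collin_of_collin hj hsj hhj (fun h' => hhs h'.symm) hdj hpj hsd hsp)
  have hs : IsDeepPoint 𝓛 W s :=
    (hdeep d hdj hdh).of_not_collin hpolar hW hsW fun h' => hsd h'.symm
  exact hs.of_not_collin hpolar hW hhW (fun h' => hhs h'.symm)

-- Any line leaving `W` meets it in a non-deep point `h` collinear with both `a` and `w`; then
-- every point of the line `ah` other than `h` is deep, which forces `h` to be deep too.
theorem IsDeepPoint.collin (hthick : Thick 𝓛) (hnd : Nondegenerate 𝓛) (hL : 𝓛.Nonempty)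
    {a w : S} (ha : IsDeepPoint 𝓛 W a) (hw : IsDeepPoint 𝓛 W w) : Collin 𝓛 a w := by
  by_contra haw
  obtain ⟨x, hx⟩ := (Set.ne_univ_iff_exists_notMem W).mp hW.2.1
  obtain ⟨k, hk, hxk⟩ := hpolar.exists_line_mem hL x
  have hkW : ¬ k ⊆ W := fun hkW => hx (hkW hxk)
  obtain ⟨h, hhk, hhW⟩ := hW.2.2 k hk
  have hh := not_isDeepPoint_of_mem_line hk hkW hhk hhW
  have hah := ha.collin_of_not_isDeepPoint hpolar hW hhW hh
  have hwh := hw.collin_of_not_isDeepPoint hpolar hW hhW hh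
  obtain ⟨j, hj, haj, hhj⟩ := hah.exists_line (by rintro rfl; exact hh ha)
  have hwj : w ∉ j := fun hwj => haw (collin_of_mem_line hj haj hwj)
  refine hh <| isDeepPoint_of_forall_ne_isDeepPoint hpolar hW hthick hnd hj hhj hhW
    fun d hdj hdh => ?_
  refine hw.of_not_collin hpolar hW (ha.subset_of_mem_line hj haj hdj) fun hwd => hdh ?_
  exact hpolar.eq_of_collin_of_collin hj hwj haj (fun h' => haw h'.symm) hdj hhj hwd hwh

theorem IsDeepPoint.perp_eq (hthick : Thick 𝓛) (hnd : Nondegenerate 𝓛) (hL : 𝓛.Nonempty)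
    {a : S} (ha : IsDeepPoint 𝓛 W a) : perp 𝓛 a = W := by
  refine ha.perp_subset.antisymm fun w hwW => ?_
  by_contra haw
  exact haw (ha.collin hpolar hW hthick hnd hL (ha.of_not_collin hpolar hW hwW haw))

end DeepPoint

theorem statement_3 (𝓛 : Set (Set S)) (hpolar : IsPolarSpace 𝓛) (hthick : Thick 𝓛)
    (hnd : Nondegenerate 𝓛) (hrank : RankAtLeast 𝓛 3)
    (W : Set S) (hW : IsHyperplane 𝓛 W) :
    (∀ a b : S, IsDeepPoint 𝓛 W a → IsDeepPoint 𝓛 W b → a = b) ∧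
    (∀ a : S, IsDeepPoint 𝓛 W a → a ∈ radSet 𝓛 W) := by
  have hL : 𝓛.Nonempty := hrank.nonempty_lines (by norm_num)
  have hperp {a : S} (ha : IsDeepPoint 𝓛 W a) : perp 𝓛 a = W :=
    ha.perp_eq hpolar hW hthick hnd hL
  exact ⟨fun a b ha hb => hpolar.eq_of_perp_eq hnd ((hperp ha).trans (hperp hb).symm),
    fun a ha => ⟨ha.1, fun b hb => (hperp ha).ge hb⟩⟩

end PolarComp
end

section
/- Let P = (S, 𝓛) be a thick nondegenerate polar space of rank at least 3 and let W be a proper subspace of P that is contained in some hyperplane of P but is not itself a hyperplane. Then W contains no deep points; that is, every point of W equals L^∞ for some affine line L of D(P, W), and in particular W is spiky. -/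
namespace PolarComp

variable {S : Type*}

/-!
A line `l` missing `W` exists because `W` is not a hyperplane. For `a ∈ W`, the one-or-all axiom
gives a point `b ∈ l` collinear with `a`; as `b ∉ W`, the line `ab` is not contained in `W`, so
removing `W` from it leaves an affine line whose point at infinity is `a`.
-/

theorem exists_disjoint_line_of_not_isHyperplane {𝓛 : Set (Set S)} {W : Set S}
    (hsub : IsSubspace 𝓛 W) (hproper : W ≠ Set.univ) (hnothyp : ¬ IsHyperplane 𝓛 W) :
    ∃ l ∈ 𝓛, Disjoint l W := by
  by_contra! h
  exact hnothyp ⟨hsub, hproper, fun l hl => Set.not_disjoint_iff_nonempty_inter.mp (h l hl)⟩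

theorem IsPolarSpace.exists_mem_collin {𝓛 : Set (Set S)} (hpolar : IsPolarSpace 𝓛)
    {l : Set S} (hl : l ∈ 𝓛) (a : S) : ∃ b ∈ l, Collin 𝓛 a b := by
  by_cases hal : a ∈ l
  · exact ⟨a, hal, Or.inl rfl⟩
  rcases hpolar.2 l hl a hal with ⟨b, ⟨hbl, hab⟩, -⟩ | hall
  · exact ⟨b, hbl, hab⟩
  · obtain ⟨b, -, -, hbl, -⟩ := hpolar.1.1 l hl
    exact ⟨b, hbl, hall b hbl⟩

theorem IsPolarSpace.exists_atInfinity {𝓛 : Set (Set S)} (hpolar : IsPolarSpace 𝓛)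
    {W l : Set S} (hl : l ∈ 𝓛) (hlW : Disjoint l W) {a : S} (ha : a ∈ W) :
    ∃ K : Set S, IsAffineLine 𝓛 W K ∧ AtInfinity 𝓛 W K a := by
  obtain ⟨b, hbl, hab⟩ := hpolar.exists_mem_collin hl a
  have hbW : b ∉ W := Set.disjoint_left.mp hlW hbl
  rcases hab with rfl | ⟨k, hk, hak, hbk⟩
  · exact absurd ha hbW
  have hkW : ¬ k ⊆ W := fun h => hbW (h hbk)
  exact ⟨k \ W, ⟨k, hk, hkW, rfl, a, hak, ha⟩, ⟨k, hk, hkW, rfl, hak, ha⟩⟩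

theorem AtInfinity.exists_collin_notMem {𝓛 : Set (Set S)} {W K : Set S} {a : S}
    (h : AtInfinity 𝓛 W K a) : ∃ b : S, b ∉ W ∧ Collin 𝓛 a b := by
  obtain ⟨k, hk, hkW, -, hak, -⟩ := h
  obtain ⟨b, hbk, hbW⟩ := Set.not_subset.mp hkW
  exact ⟨b, hbW, Or.inr ⟨k, hk, hak, hbk⟩⟩

theorem statement_4_general (𝓛 : Set (Set S)) (hpolar : IsPolarSpace 𝓛)
    (W : Set S) (hsub : IsSubspace 𝓛 W) (hproper : W ≠ Set.univ)
    (hnothyp : ¬ IsHyperplane 𝓛 W) :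
    (∀ a : S, ¬ IsDeepPoint 𝓛 W a) ∧
    (∀ a ∈ W, ∃ K : Set S, IsAffineLine 𝓛 W K ∧ AtInfinity 𝓛 W K a) ∧
    (∀ a ∈ W, ∃ b : S, b ∉ W ∧ Collin 𝓛 a b) := by
  obtain ⟨l, hl, hlW⟩ := exists_disjoint_line_of_not_isHyperplane hsub hproper hnothyp
  have hinf : ∀ a ∈ W, ∃ K : Set S, IsAffineLine 𝓛 W K ∧ AtInfinity 𝓛 W K a :=
    fun a ha => hpolar.exists_atInfinity hl hlW ha
  refine ⟨fun a ⟨ha, hdeep⟩ => ?_, hinf, fun a ha => ?_⟩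
  · obtain ⟨K, -, hK⟩ := hinf a ha
    exact hdeep K hK
  · obtain ⟨K, -, hK⟩ := hinf a ha
    exact hK.exists_collin_notMem

theorem statement_4 (𝓛 : Set (Set S)) (hpolar : IsPolarSpace 𝓛) (hthick : Thick 𝓛)
    (hnd : Nondegenerate 𝓛) (hrank : RankAtLeast 𝓛 3)
    (W : Set S) (hsub : IsSubspace 𝓛 W) (hproper : W ≠ Set.univ)
    (hhyp : ∃ H : Set S, IsHyperplane 𝓛 H ∧ W ⊆ H)
    (hnothyp : ¬ IsHyperplane 𝓛 W) :
    (∀ a : S, ¬ IsDeepPoint 𝓛 W a) ∧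
    (∀ a ∈ W, ∃ K : Set S, IsAffineLine 𝓛 W K ∧ AtInfinity 𝓛 W K a) ∧
    (∀ a ∈ W, ∃ b : S, b ∉ W ∧ Collin 𝓛 a b) :=
  statement_4_general 𝓛 hpolar W hsub hproper hnothyp

end PolarComp
end
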